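/- Reduction of the damped Klein-Gordon equation to an ODE along hyperbolic rays: Let c > 0 and let v, h, f be smooth functions on K_{[s₀,s₁]} satisfying □v − h ∂_t v + c² v = f. Fix (t,x) ∈ K_{[s₀,s₁]}, set s = √(t² − |x|²) and let γ_{t,x}(λ) = (λt/s, λx/s). Define w(λ) = λ^{3/2} v(γ_{t,x}(λ)). Then w satisfies w''(λ) − D(λ) w'(λ) + c² w(λ) = R₁(λ) + R₂(λ) + F(λ), where D(λ) = (t/s)·h(γ_{t,x}(λ)), R₁(λ) is the function s^{3/2}[ Σ_{a,b}(x^a x^b/s²) ∂̄_a ∂̄_b v + Σ_a ∂̄_a ∂̄_a v + Σ_a (3x^a/s²) ∂̄_a v + (3/(4s²)) v ] evaluated at γ_{t,x}(λ) (with s, x denoting the hyperbolic coordinates of the evaluation point), R₂(λ) is the function −(3t/(2 s^{1/2})) h v − Σ_a s^{1/2}(x^a/s) h L_a v evaluated at γ_{t,x}(λ), and F(λ) = s^{3/2} f evaluated at γ_{t,x}(λ), i.e. F(λ) = λ^{3/2} f(γ_{t,x}(λ)). -/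

import Mathlib

noncomputable section

/-- Spatial radius `r = |x|` of a space-time point `p = (t,x)`. -/
def rad (p : Fin 4 → ℝ) : ℝ := Real.sqrt (∑ a : Fin 3, (p a.succ) ^ 2)

/-- Partial derivative in the `i`-th coordinate direction (`0` is time). -/
def pd (i : Fin 4) (u : (Fin 4 → ℝ) → ℝ) : (Fin 4 → ℝ) → ℝ :=
  fun p => fderiv ℝ u p (Pi.single i 1)

/-- The flat wave operator `□u = ∂_t∂_t u - Σ_a ∂_a∂_a u`. -/
def box (u : (Fin 4 → ℝ) → ℝ) : (Fin 4 → ℝ) → ℝ :=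
  fun p => pd 0 (pd 0 u) p - ∑ a : Fin 3, pd a.succ (pd a.succ u) p

/-- The hyperboloidal time `s = √(t² - r²)`. -/
def sfun (p : Fin 4 → ℝ) : ℝ := Real.sqrt ((p 0) ^ 2 - (rad p) ^ 2)

/-- `∂̄_s v = (s/t) ∂_t v`, the `s`-coordinate vector field of hyperbolic coordinates. -/
def dbs (v : (Fin 4 → ℝ) → ℝ) : (Fin 4 → ℝ) → ℝ :=
  fun p => (sfun p / p 0) * pd 0 v p

/-- `∂̄_a v = (x^a/t) ∂_t v + ∂_a v`, the spatial vector fields of hyperbolic coordinates. -/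
def dba (a : Fin 3) (v : (Fin 4 → ℝ) → ℝ) : (Fin 4 → ℝ) → ℝ :=
  fun p => (p a.succ / p 0) * pd 0 v p + pd a.succ v p

/-- The region `K_{[s₀,s₁]} = {(t,x) : s₀² ≤ t² - r² ≤ s₁², r < t - 1}`. -/
def Kset (s₀ s₁ : ℝ) : Set (Fin 4 → ℝ) :=
  {p | s₀ ^ 2 ≤ (p 0) ^ 2 - (rad p) ^ 2 ∧ (p 0) ^ 2 - (rad p) ^ 2 ≤ s₁ ^ 2 ∧ rad p < p 0 - 1}

/-- The Lorentz boost `L_a = x^a ∂_t + t ∂_a`. -/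
def Lop (a : Fin 3) (u : (Fin 4 → ℝ) → ℝ) : (Fin 4 → ℝ) → ℝ :=
  fun p => p a.succ * pd 0 u p + p 0 * pd a.succ u p

/-- The integral curve `γ_{t,x}(λ) = (λt/s, λx/s)` of `ℒ` through `(t,x)`. -/
def ray (p : Fin 4 → ℝ) (lam : ℝ) : Fin 4 → ℝ :=
  fun i => (lam / sfun p) * p i

/-- The term `R₁`: `s^{3/2}( Σ_{a,b}(x^a x^b/s²) ∂̄_a ∂̄_b v + Σ_a ∂̄_a ∂̄_a v
+ Σ_a (3x^a/s²) ∂̄_a v + (3/(4s²)) v )` as a function of the space-time point. -/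
def R1fun (v : (Fin 4 → ℝ) → ℝ) : (Fin 4 → ℝ) → ℝ :=
  fun q => (sfun q) ^ ((3:ℝ)/2) *
    ((∑ a : Fin 3, ∑ b : Fin 3, (q a.succ * q b.succ / (sfun q) ^ 2) * dba a (dba b v) q)
      + (∑ a : Fin 3, dba a (dba a v) q)
      + (∑ a : Fin 3, (3 * q a.succ / (sfun q) ^ 2) * dba a v q)
      + (3 / (4 * (sfun q) ^ 2)) * v q)

/-- The term `R₂`: `-(3t/(2√s)) h v - Σ_a √s (x^a/s) h L_a v` as a function of the point. -/
def R2fun (h v : (Fin 4 → ℝ) → ℝ) : (Fin 4 → ℝ) → ℝ :=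
  fun q => -(3 * q 0 / (2 * (sfun q) ^ ((1:ℝ)/2))) * h q * v q
    - ∑ a : Fin 3, (sfun q) ^ ((1:ℝ)/2) * (q a.succ / sfun q) * h q * Lop a v q

-- auxiliary lemmas
lemma clm_apply_eq (L : (Fin 4 → ℝ) →L[ℝ] ℝ) (y : Fin 4 → ℝ) :
    L y = ∑ i, y i * L (Pi.single i 1) := by
  have hy : (∑ i, y i • (Pi.single i (1:ℝ) : Fin 4 → ℝ)) = y := by
    have h2 : ∀ i : Fin 4, y i • (Pi.single i (1:ℝ) : Fin 4 → ℝ) = Pi.single i (y i) := by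
      intro i; rw [← Pi.single_smul]; simp
    simp_rw [h2]; exact Finset.univ_sum_single y
  conv_lhs => rw [← hy]
  rw [map_sum]; simp [smul_eq_mul]

lemma pd_smooth (u : (Fin 4 → ℝ) → ℝ) (hu : ContDiff ℝ (⊤ : ℕ∞) u) (i : Fin 4) :
    ContDiff ℝ (⊤ : ℕ∞) (pd i u) :=
  (hu.fderiv_right (by simp)).clm_apply contDiff_const

lemma ray_eq (p : Fin 4 → ℝ) (μ : ℝ) : ray p μ = μ • (fun i => p i / sfun p) := by
  funext i; simp [ray]; ring

lemma hasDerivAt_ray (p : Fin 4 → ℝ) (u : (Fin 4 → ℝ) → ℝ) (hu : ContDiff ℝ (⊤ : ℕ∞) u) (μ : ℝ) :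
    HasDerivAt (fun μ => u (ray p μ)) (∑ i, (p i / sfun p) * pd i u (ray p μ)) μ := by
  set c : Fin 4 → ℝ := fun i => p i / sfun p with hc
  have hray : ∀ ν : ℝ, ray p ν = ν • c := fun ν => ray_eq p ν
  have h1 : HasDerivAt (fun ν : ℝ => ν • c) ((1:ℝ) • c) μ := (hasDerivAt_id μ).smul_const c
  have h2 : HasFDerivAt u (fderiv ℝ u (ray p μ)) (ray p μ) :=
    ((hu.differentiable (by simp)) (ray p μ)).hasFDerivAt
  rw [hray] at h2
  have h3 := h2.comp_hasDerivAt μ h1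
  have h4 : HasDerivAt (fun ν => u (ray p ν)) (fderiv ℝ u (μ • c) ((1:ℝ) • c)) μ := by
    simp_rw [hray]; exact h3
  rw [one_smul] at h4
  rw [clm_apply_eq] at h4
  rw [← hray] at h4
  exact h4

lemma pd_dba (v : (Fin 4 → ℝ) → ℝ) (hv : ContDiff ℝ (⊤ : ℕ∞) v) (b : Fin 3) (i : Fin 4)
    (q : Fin 4 → ℝ) (h0 : q 0 ≠ 0) :
    pd i (dba b v) q =
      ((if i = b.succ then 1 else 0) / q 0 - (if i = 0 then 1 else 0) * q b.succ / q 0 ^ 2)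
          * pd 0 v q
        + (q b.succ / q 0) * pd i (pd 0 v) q + pd i (pd b.succ v) q := by
  set L0 : (Fin 4 → ℝ) →L[ℝ] ℝ := ContinuousLinearMap.proj 0 with hL0
  set Lb : (Fin 4 → ℝ) →L[ℝ] ℝ := ContinuousLinearMap.proj b.succ with hLb
  have hinv : HasFDerivAt (fun p : Fin 4 → ℝ => (p 0)⁻¹) ((-(q 0 ^ 2)⁻¹) • L0) q := by
    have h1 : HasDerivAt (fun x : ℝ => x⁻¹) (-(q 0 ^ 2)⁻¹) (q 0) := hasDerivAt_inv h0
    exact h1.comp_hasFDerivAt q L0.hasFDerivAt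
  have hg1 : HasFDerivAt (fun p : Fin 4 → ℝ => p b.succ * (p 0)⁻¹)
      (q b.succ • ((-(q 0 ^ 2)⁻¹) • L0) + (q 0)⁻¹ • Lb) q :=
    Lb.hasFDerivAt.mul hinv
  have hP0 : HasFDerivAt (pd 0 v) (fderiv ℝ (pd 0 v) q) q :=
    (((pd_smooth v hv 0).differentiable (by simp)) q).hasFDerivAt
  have hPb : HasFDerivAt (pd b.succ v) (fderiv ℝ (pd b.succ v) q) q :=
    (((pd_smooth v hv b.succ).differentiable (by simp)) q).hasFDerivAt
  have htot : HasFDerivAt (dba b v)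
      (((fun p : Fin 4 → ℝ => p b.succ * (p 0)⁻¹) q • fderiv ℝ (pd 0 v) q
          + pd 0 v q • (q b.succ • ((-(q 0 ^ 2)⁻¹) • L0) + (q 0)⁻¹ • Lb))
        + fderiv ℝ (pd b.succ v) q) q := by
    have hdba : dba b v = fun p => (p b.succ * (p 0)⁻¹) * pd 0 v p + pd b.succ v p := by
      funext p; simp [dba, div_eq_mul_inv]
    rw [hdba]
    exact (hg1.mul hP0).add hPb
  have hfd := htot.fderiv
  unfold pd
  rw [hfd]
  have s1 : (Pi.single i (1:ℝ) : Fin 4 → ℝ) b.succ = if i = b.succ then 1 else 0 := by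
    simp [Pi.single_apply, eq_comm]
  have s2 : (Pi.single i (1:ℝ) : Fin 4 → ℝ) 0 = if i = 0 then 1 else 0 := by
    simp [Pi.single_apply, eq_comm]
  simp only [ContinuousLinearMap.add_apply, ContinuousLinearMap.coe_smul', Pi.smul_apply,
    ContinuousLinearMap.smul_apply, smul_eq_mul, hL0, hLb, ContinuousLinearMap.proj_apply,
    s1, s2]
  unfold pd
  split_ifs <;> field_simp <;> ring

set_option maxHeartbeats 4000000 in
/-- Reduction of the damped Klein–Gordon equation to an ODE along hyperbolic rays. -/
theorem stmt_9 (c s₀ s₁ : ℝ) (hc : 0 < c)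
    (v h f : (Fin 4 → ℝ) → ℝ)
    (hv : ContDiff ℝ (⊤ : ℕ∞) v) (hh : ContDiff ℝ (⊤ : ℕ∞) h) (hf : ContDiff ℝ (⊤ : ℕ∞) f)
    (heq : ∀ p ∈ Kset s₀ s₁, box v p - h p * pd 0 v p + c ^ 2 * v p = f p)
    (p : Fin 4 → ℝ) (hp : p ∈ Kset s₀ s₁) :
    ∀ lam : ℝ, ray p lam ∈ Kset s₀ s₁ →
      deriv (deriv (fun μ : ℝ => μ ^ ((3:ℝ)/2) * v (ray p μ))) lam
          - ((p 0 / sfun p) * h (ray p lam))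
              * deriv (fun μ : ℝ => μ ^ ((3:ℝ)/2) * v (ray p μ)) lam
          + c ^ 2 * (lam ^ ((3:ℝ)/2) * v (ray p lam))
        = R1fun v (ray p lam) + R2fun h v (ray p lam)
            + lam ^ ((3:ℝ)/2) * f (ray p lam) := by
  intro lam hq
  set q := ray p lam with hqdef
  -- basic positivity facts
  obtain ⟨hp1, hp2, hpr⟩ := hp
  have hradp : 0 ≤ rad p := Real.sqrt_nonneg _
  have hp0 : 1 < p 0 := by linarith
  have hpos : 0 < p 0 ^ 2 - rad p ^ 2 := by nlinarith
  have hs : 0 < sfun p := Real.sqrt_pos.mpr hpos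
  have hs2 : sfun p ^ 2 = p 0 ^ 2 - rad p ^ 2 := Real.sq_sqrt hpos.le
  have hradp2 : rad p ^ 2 = ∑ a : Fin 3, p a.succ ^ 2 := Real.sq_sqrt (by positivity)
  obtain ⟨hq1, hq2, hqr⟩ := hq
  have hradq : 0 ≤ rad q := Real.sqrt_nonneg _
  have hq0pos : 0 < q 0 := by linarith
  have hqi : ∀ i, q i = (lam / sfun p) * p i := fun i => rfl
  have hlam : 0 < lam := by
    have h1 : 0 < (lam / sfun p) * p 0 := by rw [← hqi 0]; exact hq0pos
    have h2 : 0 < lam / sfun p := by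
      rcases mul_pos_iff.mp h1 with ⟨ha, _⟩ | ⟨_, hb⟩
      · exact ha
      · linarith
    rcases div_pos_iff.mp h2 with ⟨ha, _⟩ | ⟨_, hb⟩
    · exact ha
    · linarith
  have hradq2 : rad q ^ 2 = ∑ a : Fin 3, q a.succ ^ 2 := Real.sq_sqrt (by positivity)
  have hsum : ∑ a : Fin 3, q a.succ ^ 2 = (lam / sfun p) ^ 2 * ∑ a : Fin 3, p a.succ ^ 2 := by
    rw [Finset.mul_sum]
    exact Finset.sum_congr rfl (fun a _ => by rw [hqi a.succ, mul_pow])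
  have hps2 : sfun p ^ 2 = p 0 ^ 2 - ∑ a : Fin 3, p a.succ ^ 2 := by rw [hs2, hradp2]
  have hcon : q 0 ^ 2 = lam ^ 2 + ∑ a : Fin 3, q a.succ ^ 2 := by
    rw [hsum, hqi 0, mul_pow]
    have hsne : sfun p ≠ 0 := hs.ne'
    field_simp
    linear_combination (-1:ℝ) * hps2
  have hsq : sfun q = lam := by
    have : sfun q = Real.sqrt (lam ^ 2) := by
      unfold sfun
      congr 1
      rw [hradq2]
      linarith [hcon]
    rw [this, Real.sqrt_sq hlam.le]
  have hci : ∀ i, p i / sfun p = q i / lam := by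
    intro i
    rw [hqi i]
    field_simp
  -- derivatives along the ray
  have hrpow32 : ∀ μ : ℝ, HasDerivAt (fun μ : ℝ => μ ^ ((3:ℝ)/2)) ((3:ℝ)/2 * μ ^ ((1:ℝ)/2)) μ := by
    intro μ
    have h1 := Real.hasDerivAt_rpow_const (x := μ) (p := (3:ℝ)/2) (Or.inr (by norm_num))
    convert h1 using 2
    norm_num
  have hw1 : ∀ μ : ℝ, HasDerivAt (fun μ : ℝ => μ ^ ((3:ℝ)/2) * v (ray p μ))
      ((3:ℝ)/2 * μ ^ ((1:ℝ)/2) * v (ray p μ)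
        + μ ^ ((3:ℝ)/2) * ∑ i, (p i / sfun p) * pd i v (ray p μ)) μ :=
    fun μ => (hrpow32 μ).mul (hasDerivAt_ray p v hv μ)
  have hd1 : deriv (fun μ : ℝ => μ ^ ((3:ℝ)/2) * v (ray p μ))
      = fun μ : ℝ => (3:ℝ)/2 * μ ^ ((1:ℝ)/2) * v (ray p μ)
        + μ ^ ((3:ℝ)/2) * ∑ i, (p i / sfun p) * pd i v (ray p μ) :=
    funext fun μ => (hw1 μ).deriv
  have hrpow12 : HasDerivAt (fun μ : ℝ => (3:ℝ)/2 * μ ^ ((1:ℝ)/2))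
      ((3:ℝ)/2 * ((1:ℝ)/2 * lam ^ ((1:ℝ)/2 - 1))) lam :=
    (Real.hasDerivAt_rpow_const (Or.inl hlam.ne')).const_mul ((3:ℝ)/2)
  have hpart1 : HasDerivAt (fun μ : ℝ => (3:ℝ)/2 * μ ^ ((1:ℝ)/2) * v (ray p μ))
      ((3:ℝ)/2 * ((1:ℝ)/2 * lam ^ ((1:ℝ)/2 - 1)) * v q
        + (3:ℝ)/2 * lam ^ ((1:ℝ)/2) * ∑ i, (p i / sfun p) * pd i v q) lam :=
    hrpow12.mul (hasDerivAt_ray p v hv lam)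
  have hG : HasDerivAt (fun μ : ℝ => ∑ i, (p i / sfun p) * pd i v (ray p μ))
      (∑ i, (p i / sfun p) * ∑ j, (p j / sfun p) * pd j (pd i v) q) lam := by
    refine HasDerivAt.fun_sum fun i _ => ?_
    exact (hasDerivAt_ray p (pd i v) (pd_smooth v hv i) lam).const_mul (p i / sfun p)
  have hpart2 : HasDerivAt
      (fun μ : ℝ => μ ^ ((3:ℝ)/2) * ∑ i, (p i / sfun p) * pd i v (ray p μ))
      ((3:ℝ)/2 * lam ^ ((1:ℝ)/2) * ∑ i, (p i / sfun p) * pd i v q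
        + lam ^ ((3:ℝ)/2) * ∑ i, (p i / sfun p) * ∑ j, (p j / sfun p) * pd j (pd i v) q) lam :=
    (hrpow32 lam).mul hG
  have hD2 : deriv (deriv (fun μ : ℝ => μ ^ ((3:ℝ)/2) * v (ray p μ))) lam
      = ((3:ℝ)/2 * ((1:ℝ)/2 * lam ^ ((1:ℝ)/2 - 1)) * v q
          + (3:ℝ)/2 * lam ^ ((1:ℝ)/2) * ∑ i, (p i / sfun p) * pd i v q)
        + ((3:ℝ)/2 * lam ^ ((1:ℝ)/2) * ∑ i, (p i / sfun p) * pd i v q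
          + lam ^ ((3:ℝ)/2) * ∑ i, (p i / sfun p) * ∑ j, (p j / sfun p) * pd j (pd i v) q) := by
    rw [hd1]
    exact (hpart1.add hpart2).deriv
  -- the PDE at q
  have heqq : pd 0 (pd 0 v) q - (∑ a : Fin 3, pd a.succ (pd a.succ v) q)
      - h q * pd 0 v q + c ^ 2 * v q = f q := heq q ⟨hq1, hq2, hqr⟩
  -- closed forms for the semi-hyperboloidal operators at q
  have hdb : ∀ a : Fin 3, dba a v q = q a.succ / q 0 * pd 0 v q + pd a.succ v q := fun a => rfl
  have hdd : ∀ a b : Fin 3, dba a (dba b v) q =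
      (q a.succ / q 0) * ((-(q b.succ) / q 0 ^ 2) * pd 0 v q
          + (q b.succ / q 0) * pd 0 (pd 0 v) q + pd 0 (pd b.succ v) q)
        + (((if a = b then (1:ℝ) else 0) / q 0) * pd 0 v q
          + (q b.succ / q 0) * pd a.succ (pd 0 v) q + pd a.succ (pd b.succ v) q) := by
    intro a b
    have h1 := pd_dba v hv b 0 q hq0pos.ne'
    have h2 := pd_dba v hv b a.succ q hq0pos.ne'
    rw [if_neg (fun hcontra => (Fin.succ_ne_zero b) hcontra.symm), if_pos rfl] at h1
    rw [if_neg (Fin.succ_ne_zero a)] at h2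
    have h3 : (if a.succ = b.succ then (1:ℝ) else 0) = if a = b then (1:ℝ) else 0 := by
      simp [Fin.succ_inj]
    rw [h3] at h2
    show (q a.succ / q 0) * pd 0 (dba b v) q + pd a.succ (dba b v) q = _
    rw [h1, h2]
    ring
  -- rewrite the goal into a pointwise algebraic identity
  rw [hD2]
  rw [hd1]
  beta_reduce
  simp only [← hqdef]
  rw [← heqq]
  unfold R1fun R2fun Lop
  simp only [hsq]
  simp_rw [hdd, hdb, hci]
  simp only [Fin.sum_univ_three, Fin.sum_univ_four]
  have e0 : (0:Fin 3).succ = (1:Fin 4) := rfl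
  have e1 : (1:Fin 3).succ = (2:Fin 4) := rfl
  have e2 : (2:Fin 3).succ = (3:Fin 4) := rfl
  simp only [e0, e1, e2]
  simp only [Fin.reduceEq, reduceIte]
  simp only [Fin.sum_univ_three, e0, e1, e2] at hcon
  have h32e : lam ^ ((3:ℝ)/2) = lam * lam ^ ((1:ℝ)/2) := by
    rw [show (3:ℝ)/2 = 1 + 1/2 by norm_num, Real.rpow_add hlam, Real.rpow_one]
  have hhalfe : lam ^ ((1:ℝ)/2 - 1) = lam ^ ((1:ℝ)/2) / lam := by
    rw [Real.rpow_sub hlam, Real.rpow_one]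
  simp only [h32e, hhalfe]
  set A := lam ^ ((1:ℝ)/2) with hA
  have hApos : 0 < A := Real.rpow_pos_of_pos hlam _
  have hA2 : A * A = lam := by rw [hA, ← Real.rpow_add hlam]; norm_num
  rw [← hA2] at hcon ⊢
  have hiA : A * A⁻¹ = 1 := mul_inv_cancel₀ hApos.ne'
  have hiq0 : q 0 * (q 0)⁻¹ = 1 := mul_inv_cancel₀ hq0pos.ne'
  linear_combination ((-1:ℝ) * (A) * (h q) * (pd 0 v q) * (A⁻¹) ^ 2 * (q 0) ^ 2 + (-1:ℝ) * (A) * (h q) * (pd 1 v q) * (A⁻¹) ^ 2 * (q 0) * (q 1) + (-1:ℝ) * (A) * (h q) * (pd 2 v q) * (A⁻¹) ^ 2 * (q 0) * (q 2) + (-1:ℝ) * (A) * (h q) * (pd 3 v q) * (A⁻¹) ^ 2 * (q 0) * (q 3) + (-3/4:ℝ) * (A) * (v q) * (A⁻¹) ^ 2 + (-4:ℝ) * (A) * (pd 0 v q) * (A⁻¹) ^ 2 * ((q 0)⁻¹) * (q 1) ^ 2 + (-4:ℝ) * (A) * (pd 0 v q) * (A⁻¹) ^ 2 * ((q 0)⁻¹)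 * (q 2) ^ 2 + (-4:ℝ) * (A) * (pd 0 v q) * (A⁻¹) ^ 2 * ((q 0)⁻¹) * (q 3) ^ 2 + (2:ℝ) * (A) * (pd 0 v q) * (A⁻¹) ^ 2 * ((q 0)⁻¹) ^ 3 * (q 1) ^ 2 * (q 2) ^ 2 + (2:ℝ) * (A) * (pd 0 v q) * (A⁻¹) ^ 2 * ((q 0)⁻¹) ^ 3 * (q 1) ^ 2 * (q 3) ^ 2 + (1:ℝ) * (A) * (pd 0 v q) * (A⁻¹) ^ 2 * ((q 0)⁻¹) ^ 3 * (q 1) ^ 4 + (2:ℝ) * (A) * (pd 0 v q) * (A⁻¹) ^ 2 * ((q 0)⁻¹) ^ 3 * (q 2) ^ 2 * (q 3) ^ 2 + (1:ℝ) * (A) * (pd 0 v q) * (A⁻¹) ^ 2 * ((q 0)⁻¹) ^ 3 * (q 2) ^ 4 + (1:ℝ) * (A) * (pd 0 v q) * (A⁻¹) ^ 2 * ((q 0)⁻¹) ^ 3 * (q 3) ^ 4 + (-3:ℝ) * (A) * (pd 1 v q) * (A⁻¹) ^ 2 * (q 1) + (-3:ℝ) * (A) * (pd 2 v q) * (A⁻¹)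 ^ 2 * (q 2) + (-3:ℝ) * (A) * (pd 3 v q) * (A⁻¹) ^ 2 * (q 3) + (-2:ℝ) * (A) * (pd 0 (pd 0 v) q) * (A⁻¹) ^ 2 * ((q 0)⁻¹) ^ 2 * (q 1) ^ 2 * (q 2) ^ 2 + (-2:ℝ) * (A) * (pd 0 (pd 0 v) q) * (A⁻¹) ^ 2 * ((q 0)⁻¹) ^ 2 * (q 1) ^ 2 * (q 3) ^ 2 + (-1:ℝ) * (A) * (pd 0 (pd 0 v) q) * (A⁻¹) ^ 2 * ((q 0)⁻¹) ^ 2 * (q 1) ^ 4 + (-2:ℝ) * (A) * (pd 0 (pd 0 v) q) * (A⁻¹) ^ 2 * ((q 0)⁻¹) ^ 2 * (q 2) ^ 2 * (q 3) ^ 2 + (-1:ℝ) * (A) * (pd 0 (pd 0 v) q) * (A⁻¹) ^ 2 * ((q 0)⁻¹) ^ 2 * (q 2) ^ 4 + (-1:ℝ) * (A) * (pd 0 (pd 0 v) q) * (A⁻¹) ^ 2 * ((q 0)⁻¹) ^ 2 * (q 3) ^ 4 + (1:ℝ) * (A) * (pd 0 (pd 0 v) q) * (A⁻¹) ^ 2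 * (q 0) ^ 2 + (-1:ℝ) * (A) * (pd 0 (pd 1 v) q) * (A⁻¹) ^ 2 * ((q 0)⁻¹) * (q 1) * (q 2) ^ 2 + (-1:ℝ) * (A) * (pd 0 (pd 1 v) q) * (A⁻¹) ^ 2 * ((q 0)⁻¹) * (q 1) * (q 3) ^ 2 + (-1:ℝ) * (A) * (pd 0 (pd 1 v) q) * (A⁻¹) ^ 2 * ((q 0)⁻¹) * (q 1) ^ 3 + (1:ℝ) * (A) * (pd 0 (pd 1 v) q) * (A⁻¹) ^ 2 * (q 0) * (q 1) + (-1:ℝ) * (A) * (pd 0 (pd 2 v) q) * (A⁻¹) ^ 2 * ((q 0)⁻¹) * (q 1) ^ 2 * (q 2) + (-1:ℝ) * (A) * (pd 0 (pd 2 v) q) * (A⁻¹) ^ 2 * ((q 0)⁻¹) * (q 2) * (q 3) ^ 2 + (-1:ℝ) * (A) * (pd 0 (pd 2 v) q) * (A⁻¹) ^ 2 * ((q 0)⁻¹) * (q 2) ^ 3 + (1:ℝ) * (A) * (pd 0 (pd 2 v) q) * (A⁻¹) ^ 2 * (q 0) * (q 2) + (-1:ℝ) * (A) * (pd 0 (pd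 3 v) q) * (A⁻¹) ^ 2 * ((q 0)⁻¹) * (q 1) ^ 2 * (q 3) + (-1:ℝ) * (A) * (pd 0 (pd 3 v) q) * (A⁻¹) ^ 2 * ((q 0)⁻¹) * (q 2) ^ 2 * (q 3) + (-1:ℝ) * (A) * (pd 0 (pd 3 v) q) * (A⁻¹) ^ 2 * ((q 0)⁻¹) * (q 3) ^ 3 + (1:ℝ) * (A) * (pd 0 (pd 3 v) q) * (A⁻¹) ^ 2 * (q 0) * (q 3) + (-1:ℝ) * (A) * (pd 1 (pd 0 v) q) * (A⁻¹) ^ 2 * ((q 0)⁻¹) * (q 1) * (q 2) ^ 2 + (-1:ℝ) * (A) * (pd 1 (pd 0 v) q) * (A⁻¹) ^ 2 * ((q 0)⁻¹) * (q 1) * (q 3) ^ 2 + (-1:ℝ) * (A) * (pd 1 (pd 0 v) q) * (A⁻¹) ^ 2 * ((q 0)⁻¹) * (q 1) ^ 3 + (1:ℝ) * (A) * (pd 1 (pd 0 v) q) * (A⁻¹) ^ 2 * (q 0) * (q 1) + (-1:ℝ) * (A) * (pd 2 (pd 0 v) q) * (A⁻¹) ^ 2 * ((q 0)⁻¹) *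 (q 1) ^ 2 * (q 2) + (-1:ℝ) * (A) * (pd 2 (pd 0 v) q) * (A⁻¹) ^ 2 * ((q 0)⁻¹) * (q 2) * (q 3) ^ 2 + (-1:ℝ) * (A) * (pd 2 (pd 0 v) q) * (A⁻¹) ^ 2 * ((q 0)⁻¹) * (q 2) ^ 3 + (1:ℝ) * (A) * (pd 2 (pd 0 v) q) * (A⁻¹) ^ 2 * (q 0) * (q 2) + (-1:ℝ) * (A) * (pd 3 (pd 0 v) q) * (A⁻¹) ^ 2 * ((q 0)⁻¹) * (q 1) ^ 2 * (q 3) + (-1:ℝ) * (A) * (pd 3 (pd 0 v) q) * (A⁻¹) ^ 2 * ((q 0)⁻¹) * (q 2) ^ 2 * (q 3) + (-1:ℝ) * (A) * (pd 3 (pd 0 v) q) * (A⁻¹) ^ 2 * ((q 0)⁻¹) * (q 3) ^ 3 + (1:ℝ) * (A) * (pd 3 (pd 0 v) q) * (A⁻¹) ^ 2 * (q 0) * (q 3) + (-1:ℝ) * (A) ^ 2 * (h q) * (pd 0 v q) * (A⁻¹) ^ 3 * (q 0) ^ 2 + (-1:ℝ) * (A) ^ 2 * (h q) * (pd 1 v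 q) * (A⁻¹) ^ 3 * (q 0) * (q 1) + (-1:ℝ) * (A) ^ 2 * (h q) * (pd 2 v q) * (A⁻¹) ^ 3 * (q 0) * (q 2) + (-1:ℝ) * (A) ^ 2 * (h q) * (pd 3 v q) * (A⁻¹) ^ 3 * (q 0) * (q 3) + (-3/4:ℝ) * (A) ^ 2 * (v q) * (A⁻¹) ^ 3 + (-4:ℝ) * (A) ^ 2 * (pd 0 v q) * (A⁻¹) ^ 3 * ((q 0)⁻¹) * (q 1) ^ 2 + (-4:ℝ) * (A) ^ 2 * (pd 0 v q) * (A⁻¹) ^ 3 * ((q 0)⁻¹) * (q 2) ^ 2 + (-4:ℝ) * (A) ^ 2 * (pd 0 v q) * (A⁻¹) ^ 3 * ((q 0)⁻¹) * (q 3) ^ 2 + (2:ℝ) * (A) ^ 2 * (pd 0 v q) * (A⁻¹) ^ 3 * ((q 0)⁻¹) ^ 3 * (q 1) ^ 2 * (q 2) ^ 2 + (2:ℝ) * (A) ^ 2 * (pd 0 v q) * (A⁻¹) ^ 3 * ((q 0)⁻¹) ^ 3 * (q 1) ^ 2 * (q 3) ^ 2 + (1:ℝ) * (A) ^ 2 *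 (pd 0 v q) * (A⁻¹) ^ 3 * ((q 0)⁻¹) ^ 3 * (q 1) ^ 4 + (2:ℝ) * (A) ^ 2 * (pd 0 v q) * (A⁻¹) ^ 3 * ((q 0)⁻¹) ^ 3 * (q 2) ^ 2 * (q 3) ^ 2 + (1:ℝ) * (A) ^ 2 * (pd 0 v q) * (A⁻¹) ^ 3 * ((q 0)⁻¹) ^ 3 * (q 2) ^ 4 + (1:ℝ) * (A) ^ 2 * (pd 0 v q) * (A⁻¹) ^ 3 * ((q 0)⁻¹) ^ 3 * (q 3) ^ 4 + (-3:ℝ) * (A) ^ 2 * (pd 1 v q) * (A⁻¹) ^ 3 * (q 1) + (-3:ℝ) * (A) ^ 2 * (pd 2 v q) * (A⁻¹) ^ 3 * (q 2) + (-3:ℝ) * (A) ^ 2 * (pd 3 v q) * (A⁻¹) ^ 3 * (q 3) + (-2:ℝ) * (A) ^ 2 * (pd 0 (pd 0 v) q) * (A⁻¹) ^ 3 * ((q 0)⁻¹) ^ 2 * (q 1) ^ 2 * (q 2) ^ 2 + (-2:ℝ) * (A) ^ 2 * (pd 0 (pd 0 v) q) * (A⁻¹) ^ 3 * ((q 0)⁻¹)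 ^ 2 * (q 1) ^ 2 * (q 3) ^ 2 + (-1:ℝ) * (A) ^ 2 * (pd 0 (pd 0 v) q) * (A⁻¹) ^ 3 * ((q 0)⁻¹) ^ 2 * (q 1) ^ 4 + (-2:ℝ) * (A) ^ 2 * (pd 0 (pd 0 v) q) * (A⁻¹) ^ 3 * ((q 0)⁻¹) ^ 2 * (q 2) ^ 2 * (q 3) ^ 2 + (-1:ℝ) * (A) ^ 2 * (pd 0 (pd 0 v) q) * (A⁻¹) ^ 3 * ((q 0)⁻¹) ^ 2 * (q 2) ^ 4 + (-1:ℝ) * (A) ^ 2 * (pd 0 (pd 0 v) q) * (A⁻¹) ^ 3 * ((q 0)⁻¹) ^ 2 * (q 3) ^ 4 + (1:ℝ) * (A) ^ 2 * (pd 0 (pd 0 v) q) * (A⁻¹) ^ 3 * (q 0) ^ 2 + (-1:ℝ) * (A) ^ 2 * (pd 0 (pd 1 v) q) * (A⁻¹) ^ 3 * ((q 0)⁻¹) * (q 1) * (q 2) ^ 2 + (-1:ℝ) * (A) ^ 2 * (pd 0 (pd 1 v) q) * (A⁻¹) ^ 3 * ((q 0)⁻¹) * (q 1) * (q 3) ^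 2 + (-1:ℝ) * (A) ^ 2 * (pd 0 (pd 1 v) q) * (A⁻¹) ^ 3 * ((q 0)⁻¹) * (q 1) ^ 3 + (1:ℝ) * (A) ^ 2 * (pd 0 (pd 1 v) q) * (A⁻¹) ^ 3 * (q 0) * (q 1) + (-1:ℝ) * (A) ^ 2 * (pd 0 (pd 2 v) q) * (A⁻¹) ^ 3 * ((q 0)⁻¹) * (q 1) ^ 2 * (q 2) + (-1:ℝ) * (A) ^ 2 * (pd 0 (pd 2 v) q) * (A⁻¹) ^ 3 * ((q 0)⁻¹) * (q 2) * (q 3) ^ 2 + (-1:ℝ) * (A) ^ 2 * (pd 0 (pd 2 v) q) * (A⁻¹) ^ 3 * ((q 0)⁻¹) * (q 2) ^ 3 + (1:ℝ) * (A) ^ 2 * (pd 0 (pd 2 v) q) * (A⁻¹) ^ 3 * (q 0) * (q 2) + (-1:ℝ) * (A) ^ 2 * (pd 0 (pd 3 v) q) * (A⁻¹) ^ 3 * ((q 0)⁻¹) * (q 1) ^ 2 * (q 3) + (-1:ℝ) * (A) ^ 2 * (pd 0 (pd 3 v) q) * (A⁻¹) ^ 3 * ((q 0)⁻¹) * (q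 2) ^ 2 * (q 3) + (-1:ℝ) * (A) ^ 2 * (pd 0 (pd 3 v) q) * (A⁻¹) ^ 3 * ((q 0)⁻¹) * (q 3) ^ 3 + (1:ℝ) * (A) ^ 2 * (pd 0 (pd 3 v) q) * (A⁻¹) ^ 3 * (q 0) * (q 3) + (-1:ℝ) * (A) ^ 2 * (pd 1 (pd 0 v) q) * (A⁻¹) ^ 3 * ((q 0)⁻¹) * (q 1) * (q 2) ^ 2 + (-1:ℝ) * (A) ^ 2 * (pd 1 (pd 0 v) q) * (A⁻¹) ^ 3 * ((q 0)⁻¹) * (q 1) * (q 3) ^ 2 + (-1:ℝ) * (A) ^ 2 * (pd 1 (pd 0 v) q) * (A⁻¹) ^ 3 * ((q 0)⁻¹) * (q 1) ^ 3 + (1:ℝ) * (A) ^ 2 * (pd 1 (pd 0 v) q) * (A⁻¹) ^ 3 * (q 0) * (q 1) + (-1:ℝ) * (A) ^ 2 * (pd 2 (pd 0 v) q) * (A⁻¹) ^ 3 * ((q 0)⁻¹) * (q 1) ^ 2 * (q 2) + (-1:ℝ) * (A) ^ 2 * (pd 2 (pd 0 v) q) * (A⁻¹) ^ 3 * ((q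 0)⁻¹) * (q 2) * (q 3) ^ 2 + (-1:ℝ) * (A) ^ 2 * (pd 2 (pd 0 v) q) * (A⁻¹) ^ 3 * ((q 0)⁻¹) * (q 2) ^ 3 + (1:ℝ) * (A) ^ 2 * (pd 2 (pd 0 v) q) * (A⁻¹) ^ 3 * (q 0) * (q 2) + (-1:ℝ) * (A) ^ 2 * (pd 3 (pd 0 v) q) * (A⁻¹) ^ 3 * ((q 0)⁻¹) * (q 1) ^ 2 * (q 3) + (-1:ℝ) * (A) ^ 2 * (pd 3 (pd 0 v) q) * (A⁻¹) ^ 3 * ((q 0)⁻¹) * (q 2) ^ 2 * (q 3) + (-1:ℝ) * (A) ^ 2 * (pd 3 (pd 0 v) q) * (A⁻¹) ^ 3 * ((q 0)⁻¹) * (q 3) ^ 3 + (1:ℝ) * (A) ^ 2 * (pd 3 (pd 0 v) q) * (A⁻¹) ^ 3 * (q 0) * (q 3) + (-1:ℝ) * (A) ^ 3 * (h q) * (pd 0 v q) * ((q 0)⁻¹) ^ 3 * (q 0) ^ 3 + (3:ℝ) * (A) ^ 3 * (pd 0 v q) * ((q 0)⁻¹) ^ 3 * (q 0) ^ 2 +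 (-1:ℝ) * (A) ^ 3 * (pd 0 v q) * ((q 0)⁻¹) ^ 3 * (q 1) ^ 2 + (-1:ℝ) * (A) ^ 3 * (pd 0 v q) * ((q 0)⁻¹) ^ 3 * (q 2) ^ 2 + (-1:ℝ) * (A) ^ 3 * (pd 0 v q) * ((q 0)⁻¹) ^ 3 * (q 3) ^ 2 + (1:ℝ) * (A) ^ 3 * (pd 0 (pd 0 v) q) * ((q 0)⁻¹) ^ 3 * (q 0) * (q 1) ^ 2 + (1:ℝ) * (A) ^ 3 * (pd 0 (pd 0 v) q) * ((q 0)⁻¹) ^ 3 * (q 0) * (q 2) ^ 2 + (1:ℝ) * (A) ^ 3 * (pd 0 (pd 0 v) q) * ((q 0)⁻¹) ^ 3 * (q 0) * (q 3) ^ 2 + (1:ℝ) * (A) ^ 3 * (pd 0 (pd 0 v) q) * ((q 0)⁻¹) ^ 3 * (q 0) ^ 3 + (1:ℝ) * (A) ^ 3 * (pd 0 (pd 1 v) q) * ((q 0)⁻¹) ^ 3 * (q 0) ^ 2 * (q 1) + (1:ℝ) * (A) ^ 3 * (pd 0 (pd 2 v) q) * ((q 0)⁻¹) ^ 3 * (q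 0) ^ 2 * (q 2) + (1:ℝ) * (A) ^ 3 * (pd 0 (pd 3 v) q) * ((q 0)⁻¹) ^ 3 * (q 0) ^ 2 * (q 3) + (1:ℝ) * (A) ^ 3 * (pd 1 (pd 0 v) q) * ((q 0)⁻¹) ^ 3 * (q 0) ^ 2 * (q 1) + (1:ℝ) * (A) ^ 3 * (pd 2 (pd 0 v) q) * ((q 0)⁻¹) ^ 3 * (q 0) ^ 2 * (q 2) + (1:ℝ) * (A) ^ 3 * (pd 3 (pd 0 v) q) * ((q 0)⁻¹) ^ 3 * (q 0) ^ 2 * (q 3) + (-3/2:ℝ) * (h q) * (v q) * (A⁻¹) * (q 0) + (-1:ℝ) * (h q) * (pd 0 v q) * (A⁻¹) * (q 0) ^ 2 + (1:ℝ) * (h q) * (pd 0 v q) * (A⁻¹) * (q 1) ^ 2 + (1:ℝ) * (h q) * (pd 0 v q) * (A⁻¹) * (q 2) ^ 2 + (1:ℝ) * (h q) * (pd 0 v q) * (A⁻¹) * (q 3) ^ 2 + (0:ℝ) * (h q) * (pd 1 v q) * (A⁻¹) * (q 0) * (q 1) + (0:ℝ) * (h q) * (pd 2 v q) * (A⁻¹)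 * (q 0) * (q 2) + (0:ℝ) * (h q) * (pd 3 v q) * (A⁻¹) * (q 0) * (q 3) + (0:ℝ) * (v q) * (A⁻¹) + (-4:ℝ) * (pd 0 v q) * (A⁻¹) * ((q 0)⁻¹) * (q 1) ^ 2 + (-4:ℝ) * (pd 0 v q) * (A⁻¹) * ((q 0)⁻¹) * (q 2) ^ 2 + (-4:ℝ) * (pd 0 v q) * (A⁻¹) * ((q 0)⁻¹) * (q 3) ^ 2 + (2:ℝ) * (pd 0 v q) * (A⁻¹) * ((q 0)⁻¹) ^ 3 * (q 1) ^ 2 * (q 2) ^ 2 + (2:ℝ) * (pd 0 v q) * (A⁻¹) * ((q 0)⁻¹) ^ 3 * (q 1) ^ 2 * (q 3) ^ 2 + (1:ℝ) * (pd 0 v q) * (A⁻¹) * ((q 0)⁻¹) ^ 3 * (q 1) ^ 4 + (2:ℝ) * (pd 0 v q) * (A⁻¹) * ((q 0)⁻¹) ^ 3 * (q 2) ^ 2 * (q 3) ^ 2 + (1:ℝ) * (pd 0 v q) * (A⁻¹) * ((q 0)⁻¹) ^ 3 * (q 2) ^ 4 + (1:ℝ) * (pd 0 v q) * (A⁻¹)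 * ((q 0)⁻¹) ^ 3 * (q 3) ^ 4 + (3:ℝ) * (pd 0 v q) * (A⁻¹) * (q 0) + (0:ℝ) * (pd 1 v q) * (A⁻¹) * (q 1) + (0:ℝ) * (pd 2 v q) * (A⁻¹) * (q 2) + (0:ℝ) * (pd 3 v q) * (A⁻¹) * (q 3) + (-2:ℝ) * (pd 0 (pd 0 v) q) * (A⁻¹) * ((q 0)⁻¹) ^ 2 * (q 1) ^ 2 * (q 2) ^ 2 + (-2:ℝ) * (pd 0 (pd 0 v) q) * (A⁻¹) * ((q 0)⁻¹) ^ 2 * (q 1) ^ 2 * (q 3) ^ 2 + (-1:ℝ) * (pd 0 (pd 0 v) q) * (A⁻¹) * ((q 0)⁻¹) ^ 2 * (q 1) ^ 4 + (-2:ℝ) * (pd 0 (pd 0 v) q) * (A⁻¹) * ((q 0)⁻¹) ^ 2 * (q 2) ^ 2 * (q 3) ^ 2 + (-1:ℝ) * (pd 0 (pd 0 v) q) * (A⁻¹) * ((q 0)⁻¹) ^ 2 * (q 2) ^ 4 + (-1:ℝ) * (pd 0 (pd 0 v) q) * (A⁻¹) * ((q 0)⁻¹) ^ 2 * (q 3)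 ^ 4 + (1:ℝ) * (pd 0 (pd 0 v) q) * (A⁻¹) * (q 0) ^ 2 + (-1:ℝ) * (pd 0 (pd 1 v) q) * (A⁻¹) * ((q 0)⁻¹) * (q 1) * (q 2) ^ 2 + (-1:ℝ) * (pd 0 (pd 1 v) q) * (A⁻¹) * ((q 0)⁻¹) * (q 1) * (q 3) ^ 2 + (-1:ℝ) * (pd 0 (pd 1 v) q) * (A⁻¹) * ((q 0)⁻¹) * (q 1) ^ 3 + (1:ℝ) * (pd 0 (pd 1 v) q) * (A⁻¹) * (q 0) * (q 1) + (-1:ℝ) * (pd 0 (pd 2 v) q) * (A⁻¹) * ((q 0)⁻¹) * (q 1) ^ 2 * (q 2) + (-1:ℝ) * (pd 0 (pd 2 v) q) * (A⁻¹) * ((q 0)⁻¹) * (q 2) * (q 3) ^ 2 + (-1:ℝ) * (pd 0 (pd 2 v) q) * (A⁻¹) * ((q 0)⁻¹) * (q 2) ^ 3 + (1:ℝ) * (pd 0 (pd 2 v) q) * (A⁻¹) * (q 0) * (q 2) + (-1:ℝ) * (pd 0 (pd 3 v) q) * (A⁻¹) * ((q 0)⁻¹) * (q 1) ^ 2 *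 (q 3) + (-1:ℝ) * (pd 0 (pd 3 v) q) * (A⁻¹) * ((q 0)⁻¹) * (q 2) ^ 2 * (q 3) + (-1:ℝ) * (pd 0 (pd 3 v) q) * (A⁻¹) * ((q 0)⁻¹) * (q 3) ^ 3 + (1:ℝ) * (pd 0 (pd 3 v) q) * (A⁻¹) * (q 0) * (q 3) + (-1:ℝ) * (pd 1 (pd 0 v) q) * (A⁻¹) * ((q 0)⁻¹) * (q 1) * (q 2) ^ 2 + (-1:ℝ) * (pd 1 (pd 0 v) q) * (A⁻¹) * ((q 0)⁻¹) * (q 1) * (q 3) ^ 2 + (-1:ℝ) * (pd 1 (pd 0 v) q) * (A⁻¹) * ((q 0)⁻¹) * (q 1) ^ 3 + (1:ℝ) * (pd 1 (pd 0 v) q) * (A⁻¹) * (q 0) * (q 1) + (-1:ℝ) * (pd 2 (pd 0 v) q) * (A⁻¹) * ((q 0)⁻¹) * (q 1) ^ 2 * (q 2) + (-1:ℝ) * (pd 2 (pd 0 v) q) * (A⁻¹) * ((q 0)⁻¹) * (q 2) * (q 3) ^ 2 + (-1:ℝ) * (pd 2 (pd 0 v) q) * (A⁻¹) * ((q 0)⁻¹)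 * (q 2) ^ 3 + (1:ℝ) * (pd 2 (pd 0 v) q) * (A⁻¹) * (q 0) * (q 2) + (-1:ℝ) * (pd 3 (pd 0 v) q) * (A⁻¹) * ((q 0)⁻¹) * (q 1) ^ 2 * (q 3) + (-1:ℝ) * (pd 3 (pd 0 v) q) * (A⁻¹) * ((q 0)⁻¹) * (q 2) ^ 2 * (q 3) + (-1:ℝ) * (pd 3 (pd 0 v) q) * (A⁻¹) * ((q 0)⁻¹) * (q 3) ^ 3 + (1:ℝ) * (pd 3 (pd 0 v) q) * (A⁻¹) * (q 0) * (q 3)) * hiA + ((-1:ℝ) * (A) ^ 3 * (h q) * (pd 0 v q) + (-1:ℝ) * (A) ^ 3 * (h q) * (pd 0 v q) * ((q 0)⁻¹) * (q 0) + (-1:ℝ) * (A) ^ 3 * (h q) * (pd 0 v q) * ((q 0)⁻¹) ^ 2 * (q 0) ^ 2 + (3:ℝ) * (A) ^ 3 * (pd 0 v q) * ((q 0)⁻¹) + (3:ℝ) * (A) ^ 3 * (pd 0 v q) * ((q 0)⁻¹) ^ 2 * (q 0) + (1:ℝ) * (A) ^ 3 * (pd 0 (pd 0 v) q) + (1:ℝ)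 * (A) ^ 3 * (pd 0 (pd 0 v) q) * ((q 0)⁻¹) * (q 0) + (1:ℝ) * (A) ^ 3 * (pd 0 (pd 0 v) q) * ((q 0)⁻¹) ^ 2 * (q 0) ^ 2 + (1:ℝ) * (A) ^ 3 * (pd 0 (pd 0 v) q) * ((q 0)⁻¹) ^ 2 * (q 1) ^ 2 + (1:ℝ) * (A) ^ 3 * (pd 0 (pd 0 v) q) * ((q 0)⁻¹) ^ 2 * (q 2) ^ 2 + (1:ℝ) * (A) ^ 3 * (pd 0 (pd 0 v) q) * ((q 0)⁻¹) ^ 2 * (q 3) ^ 2 + (1:ℝ) * (A) ^ 3 * (pd 0 (pd 1 v) q) * ((q 0)⁻¹) * (q 1) + (1:ℝ) * (A) ^ 3 * (pd 0 (pd 1 v) q) * ((q 0)⁻¹) ^ 2 * (q 0) * (q 1) + (1:ℝ) * (A) ^ 3 * (pd 0 (pd 2 v) q) * ((q 0)⁻¹) * (q 2) + (1:ℝ) * (A) ^ 3 * (pd 0 (pd 2 v) q) * ((q 0)⁻¹) ^ 2 * (q 0) * (q 2) + (1:ℝ) * (A) ^ 3 * (pd 0 (pd 3 v) q) * ((q 0)⁻¹)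 * (q 3) + (1:ℝ) * (A) ^ 3 * (pd 0 (pd 3 v) q) * ((q 0)⁻¹) ^ 2 * (q 0) * (q 3) + (1:ℝ) * (A) ^ 3 * (pd 1 (pd 0 v) q) * ((q 0)⁻¹) * (q 1) + (1:ℝ) * (A) ^ 3 * (pd 1 (pd 0 v) q) * ((q 0)⁻¹) ^ 2 * (q 0) * (q 1) + (1:ℝ) * (A) ^ 3 * (pd 2 (pd 0 v) q) * ((q 0)⁻¹) * (q 2) + (1:ℝ) * (A) ^ 3 * (pd 2 (pd 0 v) q) * ((q 0)⁻¹) ^ 2 * (q 0) * (q 2) + (1:ℝ) * (A) ^ 3 * (pd 3 (pd 0 v) q) * ((q 0)⁻¹) * (q 3) + (1:ℝ) * (A) ^ 3 * (pd 3 (pd 0 v) q) * ((q 0)⁻¹) ^ 2 * (q 0) * (q 3) + (-1:ℝ) * (h q) * (pd 0 v q) * (A⁻¹) * ((q 0)⁻¹) * (q 0) * (q 1) ^ 2 + (-1:ℝ) * (h q) * (pd 0 v q) * (A⁻¹) * ((q 0)⁻¹) * (q 0) * (q 2) ^ 2 + (-1:ℝ) * (h q) * (pd 0 v q) * (A⁻¹)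 * ((q 0)⁻¹) * (q 0) * (q 3) ^ 2 + (1:ℝ) * (h q) * (pd 0 v q) * (A⁻¹) * ((q 0)⁻¹) * (q 0) ^ 3 + (-1:ℝ) * (h q) * (pd 0 v q) * (A⁻¹) * ((q 0)⁻¹) ^ 2 * (q 0) ^ 2 * (q 1) ^ 2 + (-1:ℝ) * (h q) * (pd 0 v q) * (A⁻¹) * ((q 0)⁻¹) ^ 2 * (q 0) ^ 2 * (q 2) ^ 2 + (-1:ℝ) * (h q) * (pd 0 v q) * (A⁻¹) * ((q 0)⁻¹) ^ 2 * (q 0) ^ 2 * (q 3) ^ 2 + (1:ℝ) * (h q) * (pd 0 v q) * (A⁻¹) * ((q 0)⁻¹) ^ 2 * (q 0) ^ 4 + (1:ℝ) * (h q) * (pd 0 v q) * (A⁻¹) * (q 0) ^ 2 + (-1:ℝ) * (h q) * (pd 0 v q) * (A⁻¹) * (q 1) ^ 2 + (-1:ℝ) * (h q) * (pd 0 v q) * (A⁻¹) * (q 2) ^ 2 + (-1:ℝ) * (h q) * (pd 0 v q) * (A⁻¹) * (q 3) ^ 2 + (-3:ℝ) * (pd 0 v q) * (A⁻¹) * ((q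 0)⁻¹) * (q 0) ^ 2 + (4:ℝ) * (pd 0 v q) * (A⁻¹) * ((q 0)⁻¹) * (q 1) ^ 2 + (4:ℝ) * (pd 0 v q) * (A⁻¹) * ((q 0)⁻¹) * (q 2) ^ 2 + (4:ℝ) * (pd 0 v q) * (A⁻¹) * ((q 0)⁻¹) * (q 3) ^ 2 + (4:ℝ) * (pd 0 v q) * (A⁻¹) * ((q 0)⁻¹) ^ 2 * (q 0) * (q 1) ^ 2 + (4:ℝ) * (pd 0 v q) * (A⁻¹) * ((q 0)⁻¹) ^ 2 * (q 0) * (q 2) ^ 2 + (4:ℝ) * (pd 0 v q) * (A⁻¹) * ((q 0)⁻¹) ^ 2 * (q 0) * (q 3) ^ 2 + (-3:ℝ) * (pd 0 v q) * (A⁻¹) * ((q 0)⁻¹) ^ 2 * (q 0) ^ 3 + (-3:ℝ) * (pd 0 v q) * (A⁻¹) * (q 0) + (-1:ℝ) * (pd 0 (pd 0 v) q) * (A⁻¹) * ((q 0)⁻¹) * (q 0) ^ 3 + (-1:ℝ) * (pd 0 (pd 0 v) q) * (A⁻¹) * ((q 0)⁻¹) ^ 2 * (q 0) ^ 4 + (2:ℝ)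 * (pd 0 (pd 0 v) q) * (A⁻¹) * ((q 0)⁻¹) ^ 2 * (q 1) ^ 2 * (q 2) ^ 2 + (2:ℝ) * (pd 0 (pd 0 v) q) * (A⁻¹) * ((q 0)⁻¹) ^ 2 * (q 1) ^ 2 * (q 3) ^ 2 + (1:ℝ) * (pd 0 (pd 0 v) q) * (A⁻¹) * ((q 0)⁻¹) ^ 2 * (q 1) ^ 4 + (2:ℝ) * (pd 0 (pd 0 v) q) * (A⁻¹) * ((q 0)⁻¹) ^ 2 * (q 2) ^ 2 * (q 3) ^ 2 + (1:ℝ) * (pd 0 (pd 0 v) q) * (A⁻¹) * ((q 0)⁻¹) ^ 2 * (q 2) ^ 4 + (1:ℝ) * (pd 0 (pd 0 v) q) * (A⁻¹) * ((q 0)⁻¹) ^ 2 * (q 3) ^ 4 + (-1:ℝ) * (pd 0 (pd 0 v) q) * (A⁻¹) * (q 0) ^ 2 + (-1:ℝ) * (pd 0 (pd 1 v) q) * (A⁻¹) * ((q 0)⁻¹) * (q 0) ^ 2 * (q 1) + (1:ℝ) * (pd 0 (pd 1 v) q) * (A⁻¹) * ((q 0)⁻¹) * (q 1) * (q 2) ^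 2 + (1:ℝ) * (pd 0 (pd 1 v) q) * (A⁻¹) * ((q 0)⁻¹) * (q 1) * (q 3) ^ 2 + (1:ℝ) * (pd 0 (pd 1 v) q) * (A⁻¹) * ((q 0)⁻¹) * (q 1) ^ 3 + (1:ℝ) * (pd 0 (pd 1 v) q) * (A⁻¹) * ((q 0)⁻¹) ^ 2 * (q 0) * (q 1) * (q 2) ^ 2 + (1:ℝ) * (pd 0 (pd 1 v) q) * (A⁻¹) * ((q 0)⁻¹) ^ 2 * (q 0) * (q 1) * (q 3) ^ 2 + (1:ℝ) * (pd 0 (pd 1 v) q) * (A⁻¹) * ((q 0)⁻¹) ^ 2 * (q 0) * (q 1) ^ 3 + (-1:ℝ) * (pd 0 (pd 1 v) q) * (A⁻¹) * ((q 0)⁻¹) ^ 2 * (q 0) ^ 3 * (q 1) + (-1:ℝ) * (pd 0 (pd 1 v) q) * (A⁻¹) * (q 0) * (q 1) + (-1:ℝ) * (pd 0 (pd 2 v) q) * (A⁻¹) * ((q 0)⁻¹) * (q 0) ^ 2 * (q 2) + (1:ℝ) * (pd 0 (pd 2 v) q) * (A⁻¹) * ((q 0)⁻¹) * (q 1) ^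 2 * (q 2) + (1:ℝ) * (pd 0 (pd 2 v) q) * (A⁻¹) * ((q 0)⁻¹) * (q 2) * (q 3) ^ 2 + (1:ℝ) * (pd 0 (pd 2 v) q) * (A⁻¹) * ((q 0)⁻¹) * (q 2) ^ 3 + (1:ℝ) * (pd 0 (pd 2 v) q) * (A⁻¹) * ((q 0)⁻¹) ^ 2 * (q 0) * (q 1) ^ 2 * (q 2) + (1:ℝ) * (pd 0 (pd 2 v) q) * (A⁻¹) * ((q 0)⁻¹) ^ 2 * (q 0) * (q 2) * (q 3) ^ 2 + (1:ℝ) * (pd 0 (pd 2 v) q) * (A⁻¹) * ((q 0)⁻¹) ^ 2 * (q 0) * (q 2) ^ 3 + (-1:ℝ) * (pd 0 (pd 2 v) q) * (A⁻¹) * ((q 0)⁻¹) ^ 2 * (q 0) ^ 3 * (q 2) + (-1:ℝ) * (pd 0 (pd 2 v) q) * (A⁻¹) * (q 0) * (q 2) + (-1:ℝ) * (pd 0 (pd 3 v) q) * (A⁻¹) * ((q 0)⁻¹) * (q 0) ^ 2 * (q 3) + (1:ℝ) * (pd 0 (pd 3 v) q) * (A⁻¹) * ((q 0)⁻¹) *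 (q 1) ^ 2 * (q 3) + (1:ℝ) * (pd 0 (pd 3 v) q) * (A⁻¹) * ((q 0)⁻¹) * (q 2) ^ 2 * (q 3) + (1:ℝ) * (pd 0 (pd 3 v) q) * (A⁻¹) * ((q 0)⁻¹) * (q 3) ^ 3 + (1:ℝ) * (pd 0 (pd 3 v) q) * (A⁻¹) * ((q 0)⁻¹) ^ 2 * (q 0) * (q 1) ^ 2 * (q 3) + (1:ℝ) * (pd 0 (pd 3 v) q) * (A⁻¹) * ((q 0)⁻¹) ^ 2 * (q 0) * (q 2) ^ 2 * (q 3) + (1:ℝ) * (pd 0 (pd 3 v) q) * (A⁻¹) * ((q 0)⁻¹) ^ 2 * (q 0) * (q 3) ^ 3 + (-1:ℝ) * (pd 0 (pd 3 v) q) * (A⁻¹) * ((q 0)⁻¹) ^ 2 * (q 0) ^ 3 * (q 3) + (-1:ℝ) * (pd 0 (pd 3 v) q) * (A⁻¹) * (q 0) * (q 3) + (-1:ℝ) * (pd 1 (pd 0 v) q) * (A⁻¹) * ((q 0)⁻¹) * (q 0) ^ 2 * (q 1) + (1:ℝ) * (pd 1 (pd 0 v) q) * (A⁻¹) * ((q 0)⁻¹)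 * (q 1) * (q 2) ^ 2 + (1:ℝ) * (pd 1 (pd 0 v) q) * (A⁻¹) * ((q 0)⁻¹) * (q 1) * (q 3) ^ 2 + (1:ℝ) * (pd 1 (pd 0 v) q) * (A⁻¹) * ((q 0)⁻¹) * (q 1) ^ 3 + (1:ℝ) * (pd 1 (pd 0 v) q) * (A⁻¹) * ((q 0)⁻¹) ^ 2 * (q 0) * (q 1) * (q 2) ^ 2 + (1:ℝ) * (pd 1 (pd 0 v) q) * (A⁻¹) * ((q 0)⁻¹) ^ 2 * (q 0) * (q 1) * (q 3) ^ 2 + (1:ℝ) * (pd 1 (pd 0 v) q) * (A⁻¹) * ((q 0)⁻¹) ^ 2 * (q 0) * (q 1) ^ 3 + (-1:ℝ) * (pd 1 (pd 0 v) q) * (A⁻¹) * ((q 0)⁻¹) ^ 2 * (q 0) ^ 3 * (q 1) + (-1:ℝ) * (pd 1 (pd 0 v) q) * (A⁻¹) * (q 0) * (q 1) + (-1:ℝ) * (pd 2 (pd 0 v) q) * (A⁻¹) * ((q 0)⁻¹) * (q 0) ^ 2 * (q 2) + (1:ℝ) * (pd 2 (pd 0 v) q) * (A⁻¹) * ((q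 0)⁻¹) * (q 1) ^ 2 * (q 2) + (1:ℝ) * (pd 2 (pd 0 v) q) * (A⁻¹) * ((q 0)⁻¹) * (q 2) * (q 3) ^ 2 + (1:ℝ) * (pd 2 (pd 0 v) q) * (A⁻¹) * ((q 0)⁻¹) * (q 2) ^ 3 + (1:ℝ) * (pd 2 (pd 0 v) q) * (A⁻¹) * ((q 0)⁻¹) ^ 2 * (q 0) * (q 1) ^ 2 * (q 2) + (1:ℝ) * (pd 2 (pd 0 v) q) * (A⁻¹) * ((q 0)⁻¹) ^ 2 * (q 0) * (q 2) * (q 3) ^ 2 + (1:ℝ) * (pd 2 (pd 0 v) q) * (A⁻¹) * ((q 0)⁻¹) ^ 2 * (q 0) * (q 2) ^ 3 + (-1:ℝ) * (pd 2 (pd 0 v) q) * (A⁻¹) * ((q 0)⁻¹) ^ 2 * (q 0) ^ 3 * (q 2) + (-1:ℝ) * (pd 2 (pd 0 v) q) * (A⁻¹) * (q 0) * (q 2) + (-1:ℝ) * (pd 3 (pd 0 v) q) * (A⁻¹) * ((q 0)⁻¹) * (q 0) ^ 2 * (q 3) + (1:ℝ) * (pd 3 (pd 0 v) q) * (A⁻¹)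 * ((q 0)⁻¹) * (q 1) ^ 2 * (q 3) + (1:ℝ) * (pd 3 (pd 0 v) q) * (A⁻¹) * ((q 0)⁻¹) * (q 2) ^ 2 * (q 3) + (1:ℝ) * (pd 3 (pd 0 v) q) * (A⁻¹) * ((q 0)⁻¹) * (q 3) ^ 3 + (1:ℝ) * (pd 3 (pd 0 v) q) * (A⁻¹) * ((q 0)⁻¹) ^ 2 * (q 0) * (q 1) ^ 2 * (q 3) + (1:ℝ) * (pd 3 (pd 0 v) q) * (A⁻¹) * ((q 0)⁻¹) ^ 2 * (q 0) * (q 2) ^ 2 * (q 3) + (1:ℝ) * (pd 3 (pd 0 v) q) * (A⁻¹) * ((q 0)⁻¹) ^ 2 * (q 0) * (q 3) ^ 3 + (-1:ℝ) * (pd 3 (pd 0 v) q) * (A⁻¹) * ((q 0)⁻¹) ^ 2 * (q 0) ^ 3 * (q 3) + (-1:ℝ) * (pd 3 (pd 0 v) q) * (A⁻¹) * (q 0) * (q 3)) * hiq0 + ((-1:ℝ) * (h q) * (pd 0 v q) * (A⁻¹) * ((q 0)⁻¹) ^ 3 * (q 0) ^ 3 + (3:ℝ) * (pd 0 v q) *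 (A⁻¹) * ((q 0)⁻¹) ^ 3 * (q 0) ^ 2 + (-1:ℝ) * (pd 0 v q) * (A⁻¹) * ((q 0)⁻¹) ^ 3 * (q 1) ^ 2 + (-1:ℝ) * (pd 0 v q) * (A⁻¹) * ((q 0)⁻¹) ^ 3 * (q 2) ^ 2 + (-1:ℝ) * (pd 0 v q) * (A⁻¹) * ((q 0)⁻¹) ^ 3 * (q 3) ^ 2 + (1:ℝ) * (pd 0 (pd 0 v) q) * (A⁻¹) * ((q 0)⁻¹) ^ 3 * (q 0) * (q 1) ^ 2 + (1:ℝ) * (pd 0 (pd 0 v) q) * (A⁻¹) * ((q 0)⁻¹) ^ 3 * (q 0) * (q 2) ^ 2 + (1:ℝ) * (pd 0 (pd 0 v) q) * (A⁻¹) * ((q 0)⁻¹) ^ 3 * (q 0) * (q 3) ^ 2 + (1:ℝ) * (pd 0 (pd 0 v) q) * (A⁻¹) * ((q 0)⁻¹) ^ 3 * (q 0) ^ 3 + (1:ℝ) * (pd 0 (pd 1 v) q) * (A⁻¹) * ((q 0)⁻¹) ^ 3 * (q 0) ^ 2 * (q 1) + (1:ℝ) * (pd 0 (pd 2 v) q)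 * (A⁻¹) * ((q 0)⁻¹) ^ 3 * (q 0) ^ 2 * (q 2) + (1:ℝ) * (pd 0 (pd 3 v) q) * (A⁻¹) * ((q 0)⁻¹) ^ 3 * (q 0) ^ 2 * (q 3) + (1:ℝ) * (pd 1 (pd 0 v) q) * (A⁻¹) * ((q 0)⁻¹) ^ 3 * (q 0) ^ 2 * (q 1) + (1:ℝ) * (pd 2 (pd 0 v) q) * (A⁻¹) * ((q 0)⁻¹) ^ 3 * (q 0) ^ 2 * (q 2) + (1:ℝ) * (pd 3 (pd 0 v) q) * (A⁻¹) * ((q 0)⁻¹) ^ 3 * (q 0) ^ 2 * (q 3)) * hcon
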